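/- Variational characterisation of the discrete mid-point Hamiltonian system: let H : ℝ^d × ℝ^d → ℝ be differentiable and define, for p, q : {0,…,N} → ℝ^d, the discrete action 𝓐(p,q) = Σ_{i=0}^{N−1} h·[⟨p_{∘,i+½}, (q_{i+1} − q_i)/h⟩ − H(p_{∘,i+½}, q_{∘,i+½})], where p_{∘,i+½} = (p_i + p_{i+1})/2 and q_{∘,i+½} = (q_i + q_{i+1})/2. Then (p,q) is a critical point of 𝓐 — meaning that for every w : {0,…,N} → ℝ^d and every v : {0,…,N} → ℝ^d with v_0 = v_N = 0, the map ε ↦ 𝓐(p + ε w, q + ε v) has derivative 0 at ε = 0 — if and only if both: (i) (p_{∘,i+½} − p_{∘,i−½})/h = −(1/2)[∂H/∂q(p_{∘,i+½}, q_{∘,i+½}) + ∂H/∂q(p_{∘,i−½}, q_{∘,i−½})] for all i = 1,…,N−1, and (ii) (q_{i+1} − q_i)/h = ∂H/∂p(p_{∘,i+½}, q_{∘,i+½}) for all i = 0,…,N−1. -/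

import Mathlib

open scoped RealInnerProductSpace

/-- Gradient of `H` in its first (momentum) variable. -/
noncomputable def gradHp (d : ℕ)
    (H : EuclideanSpace ℝ (Fin d) × EuclideanSpace ℝ (Fin d) → ℝ)
    (a b : EuclideanSpace ℝ (Fin d)) : EuclideanSpace ℝ (Fin d) :=
  gradient (fun x => H (x, b)) a

/-- Gradient of `H` in its second (position) variable. -/
noncomputable def gradHq (d : ℕ)
    (H : EuclideanSpace ℝ (Fin d) × EuclideanSpace ℝ (Fin d) → ℝ)
    (a b : EuclideanSpace ℝ (Fin d)) : EuclideanSpace ℝ (Fin d) :=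
  gradient (fun y => H (a, y)) b

/-- Mid-point value `u_{∘,i+½} = (u_i + u_{i+1})/2` of a sequence. -/
noncomputable def mid (d : ℕ) (u : ℕ → EuclideanSpace ℝ (Fin d)) (i : ℕ) :
    EuclideanSpace ℝ (Fin d) :=
  (2 : ℝ)⁻¹ • (u i + u (i + 1))

/-!
The derivative of `ε ↦ 𝓐(p + ε w, q + ε v)` at `0` is linear in `(w, v)`. Summation by parts,
using `v 0 = v N = 0`, writes it as
`∑ᵢ h (⟪w_{∘,i+½}, Rᵢ⟫ - ⟪v_{i+1}, Sᵢ⟫)`, where `Rᵢ = 0` is the position equation (ii) at `i` and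
`Sᵢ = 0` the momentum equation (i) at `i + 1`. Choosing `w` with `w_{∘,i+½} = Rᵢ` and
`v_{i+1} = Sᵢ` turns this into a sum of squares, so it vanishes for all variations exactly when
all residuals vanish.
-/

theorem hasDerivAt_add_smul {Z : Type*} [NormedAddCommGroup Z] [NormedSpace ℝ Z] (z w : Z) :
    HasDerivAt (fun ε : ℝ => z + ε • w) w 0 := by
  simpa using ((hasDerivAt_id (0 : ℝ)).smul_const w).const_add z

theorem exists_add_succ_eq {Z : Type*} [AddCommGroup Z] (c : ℕ → Z) :
    ∃ w : ℕ → Z, ∀ i, w i + w (i + 1) = c i :=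
  ⟨fun n => Nat.rec 0 (fun i wi => c i - wi) n, fun _ => add_sub_cancel _ _⟩

section InnerProductSpace

variable {X Y : Type*} [NormedAddCommGroup X] [InnerProductSpace ℝ X]
  [NormedAddCommGroup Y] [InnerProductSpace ℝ Y]

theorem hasDerivAt_comp_add_smul_prod [CompleteSpace X] [CompleteSpace Y] {H : X × Y → ℝ}
    {a : X} {b : Y} (hH : DifferentiableAt ℝ H (a, b)) (u : X) (v : Y) :
    HasDerivAt (fun ε : ℝ => H (a + ε • u, b + ε • v))
      (⟪gradient (fun x => H (x, b)) a, u⟫ + ⟪gradient (fun y => H (a, y)) b, v⟫) 0 := by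
  have hx : HasFDerivAt (fun x => H (x, b)) ((fderiv ℝ H (a, b)).comp (.inl ℝ X Y)) a :=
    hH.hasFDerivAt.comp a (hasFDerivAt_prodMk_left a b)
  have hy : HasFDerivAt (fun y => H (a, y)) ((fderiv ℝ H (a, b)).comp (.inr ℝ X Y)) b :=
    hH.hasFDerivAt.comp b (hasFDerivAt_prodMk_right a b)
  have hcomp := hH.hasFDerivAt.comp_hasDerivAt_of_eq 0
    ((hasDerivAt_add_smul a u).prodMk (hasDerivAt_add_smul b v)) (by simp)
  refine hcomp.congr_deriv ?_
  calc fderiv ℝ H (a, b) (u, v) = fderiv ℝ H (a, b) (u, 0) + fderiv ℝ H (a, b) (0, v) := by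
        rw [← map_add, Prod.mk_add_mk, add_zero, zero_add]
    _ = _ := by
        simp only [gradient, hx.fderiv, hy.fderiv, InnerProductSpace.toDual_symm_apply,
          ContinuousLinearMap.comp_apply, ContinuousLinearMap.inl_apply,
          ContinuousLinearMap.inr_apply]

/-- Summation by parts, one summand at a time: the last term telescopes. -/
theorem firstVariation_summand_eq {h : ℝ} (hh : h ≠ 0) (P P' G G' x y m c g : X) :
    h * ((⟪P, h⁻¹ • (y - x)⟫ + ⟪m, h⁻¹ • c⟫) - (⟪g, m⟫ + ⟪G, (2 : ℝ)⁻¹ • (x + y)⟫))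
      = h * (⟪m, h⁻¹ • c - g⟫ - ⟪y, h⁻¹ • (P' - P) + (2 : ℝ)⁻¹ • (G' + G)⟫)
        + (⟪y, P' + (h / 2) • G'⟫ - ⟪x, P + (h / 2) • G⟫) := by
  simp only [inner_add_right, inner_sub_right, real_inner_smul_right, real_inner_comm P,
    real_inner_comm G, real_inner_comm g]
  field_simp
  ring

theorem forall_firstVariation_eq_zero_iff {h : ℝ} (hh : h ≠ 0) {N : ℕ} (E R : ℕ → X) :
    (∀ w v : ℕ → X, v 0 = 0 → v N = 0 →
      ∑ i ∈ Finset.range N, h * (⟪(2 : ℝ)⁻¹ • (w i + w (i + 1)), E i⟫ - ⟪v (i + 1), R i⟫) = 0)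
    ↔ (∀ i < N, E i = 0) ∧ ∀ i, i + 1 < N → R i = 0 := by
  constructor
  · intro hcrit
    constructor
    · obtain ⟨w, hw⟩ := exists_add_succ_eq fun i => (2 : ℝ) • E i
      have hsum := hcrit w 0 rfl rfl
      simp only [hw, inv_smul_smul₀ (two_ne_zero (α := ℝ)), Pi.zero_apply,
        inner_zero_left, sub_zero, ← Finset.mul_sum, mul_eq_zero, hh, false_or] at hsum
      intro i hi
      exact inner_self_eq_zero.mp <| (Finset.sum_eq_zero_iff_of_nonneg fun j _ =>
        real_inner_self_nonneg).mp hsum i (Finset.mem_range.mpr hi)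
    · set v : ℕ → X := fun j => if 0 < j ∧ j < N then R (j - 1) else 0
      have hv : ∀ i, v (i + 1) = if i + 1 < N then R i else 0 := by simp [v]
      have hsum := hcrit 0 v (by simp [v]) (by simp [v])
      simp only [Pi.zero_apply, add_zero, smul_zero, inner_zero_left, zero_sub, mul_neg,
        Finset.sum_neg_distrib, neg_eq_zero, ← Finset.mul_sum, mul_eq_zero, hh, false_or] at hsum
      have hnonneg : ∀ i ∈ Finset.range N, 0 ≤ ⟪v (i + 1), R i⟫ := fun i _ => by
        rw [hv]; split_ifs <;> simp
      intro i hi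
      have hi' := (Finset.sum_eq_zero_iff_of_nonneg hnonneg).mp hsum i
        (Finset.mem_range.mpr (by omega))
      rwa [hv, if_pos hi, inner_self_eq_zero] at hi'
  · rintro ⟨hE, hR⟩ w v - hvN
    refine Finset.sum_eq_zero fun i hi => ?_
    rw [Finset.mem_range] at hi
    rcases Nat.lt_or_ge (i + 1) N with hi' | hi'
    · simp [hE i hi, hR i hi']
    · simp [hE i hi, show i + 1 = N by omega, hvN]

end InnerProductSpace

noncomputable def discreteAction (d N : ℕ) (h : ℝ)
    (H : EuclideanSpace ℝ (Fin d) × EuclideanSpace ℝ (Fin d) → ℝ)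
    (p q : ℕ → EuclideanSpace ℝ (Fin d)) : ℝ :=
  ∑ i ∈ Finset.range N, h * (⟪mid d p i, h⁻¹ • (q (i + 1) - q i)⟫ - H (mid d p i, mid d q i))

noncomputable def positionResidual (d : ℕ) (h : ℝ)
    (H : EuclideanSpace ℝ (Fin d) × EuclideanSpace ℝ (Fin d) → ℝ)
    (p q : ℕ → EuclideanSpace ℝ (Fin d)) (i : ℕ) : EuclideanSpace ℝ (Fin d) :=
  h⁻¹ • (q (i + 1) - q i) - gradHp d H (mid d p i) (mid d q i)

noncomputable def momentumResidual (d : ℕ) (h : ℝ)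
    (H : EuclideanSpace ℝ (Fin d) × EuclideanSpace ℝ (Fin d) → ℝ)
    (p q : ℕ → EuclideanSpace ℝ (Fin d)) (i : ℕ) : EuclideanSpace ℝ (Fin d) :=
  h⁻¹ • (mid d p (i + 1) - mid d p i)
    + (2 : ℝ)⁻¹ • (gradHq d H (mid d p (i + 1)) (mid d q (i + 1))
      + gradHq d H (mid d p i) (mid d q i))

section MidpointAction

variable {d N : ℕ} {h : ℝ} {H : EuclideanSpace ℝ (Fin d) × EuclideanSpace ℝ (Fin d) → ℝ}

theorem mid_add_smul (p w : ℕ → EuclideanSpace ℝ (Fin d)) (ε : ℝ) (i : ℕ) :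
    mid d (p + ε • w) i = mid d p i + ε • mid d w i := by
  simp only [mid, Pi.add_apply, Pi.smul_apply]
  module

theorem hasDerivAt_discreteAction (hH : Differentiable ℝ H)
    (p q w v : ℕ → EuclideanSpace ℝ (Fin d)) :
    HasDerivAt (fun ε : ℝ => discreteAction d N h H (p + ε • w) (q + ε • v))
      (∑ i ∈ Finset.range N, h * ((⟪mid d p i, h⁻¹ • (v (i + 1) - v i)⟫
          + ⟪mid d w i, h⁻¹ • (q (i + 1) - q i)⟫)
        - (⟪gradHp d H (mid d p i) (mid d q i), mid d w i⟫
          + ⟪gradHq d H (mid d p i) (mid d q i), mid d v i⟫))) 0 := by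
  refine HasDerivAt.fun_sum fun i _ => ?_
  have hdiff : ∀ ε : ℝ, h⁻¹ • ((q + ε • v) (i + 1) - (q + ε • v) i)
      = h⁻¹ • (q (i + 1) - q i) + ε • h⁻¹ • (v (i + 1) - v i) := fun ε => by
    simp only [Pi.add_apply, Pi.smul_apply]
    module
  simp only [mid_add_smul, hdiff]
  refine (((hasDerivAt_add_smul _ _).inner ℝ (hasDerivAt_add_smul _ _)).sub
    (hasDerivAt_comp_add_smul_prod (hH _) _ _)).const_mul h |>.congr_deriv ?_
  simp only [zero_smul, add_zero]
  rfl

theorem hasDerivAt_discreteAction_of_boundary (hH : Differentiable ℝ H) (hh : h ≠ 0)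
    (p q w v : ℕ → EuclideanSpace ℝ (Fin d)) (hv0 : v 0 = 0) (hvN : v N = 0) :
    HasDerivAt (fun ε : ℝ => discreteAction d N h H (p + ε • w) (q + ε • v))
      (∑ i ∈ Finset.range N, h * (⟪mid d w i, positionResidual d h H p q i⟫
        - ⟪v (i + 1), momentumResidual d h H p q i⟫)) 0 := by
  refine (hasDerivAt_discreteAction hH p q w v).congr_deriv ?_
  set b := fun i => mid d p i + (h / 2) • gradHq d H (mid d p i) (mid d q i)
  calc _ = ∑ i ∈ Finset.range N, (h * (⟪mid d w i, positionResidual d h H p q i⟫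
          - ⟪v (i + 1), momentumResidual d h H p q i⟫) + (⟪v (i + 1), b (i + 1)⟫ - ⟪v i, b i⟫)) :=
        Finset.sum_congr rfl fun i _ => firstVariation_summand_eq hh _ _ _ _ (v i) (v (i + 1)) _ _ _
    _ = _ := by
        rw [Finset.sum_add_distrib, Finset.sum_range_sub (fun i => ⟪v i, b i⟫), hv0, hvN]
        simp

theorem momentumResidual_eq_zero_iff (p q : ℕ → EuclideanSpace ℝ (Fin d)) (i : ℕ) :
    momentumResidual d h H p q i = 0 ↔ h⁻¹ • (mid d p (i + 1) - mid d p i)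
      = -(2 : ℝ)⁻¹ • (gradHq d H (mid d p (i + 1)) (mid d q (i + 1))
        + gradHq d H (mid d p i) (mid d q i)) := by
  rw [neg_smul, eq_neg_iff_add_eq_zero, momentumResidual]

end MidpointAction

theorem variational_characterisation_midpoint_hamiltonian_general
    (d N : ℕ) (h : ℝ) (hh : 0 < h)
    (H : EuclideanSpace ℝ (Fin d) × EuclideanSpace ℝ (Fin d) → ℝ)
    (hH : Differentiable ℝ H)
    (p q : ℕ → EuclideanSpace ℝ (Fin d)) :
    (∀ w v : ℕ → EuclideanSpace ℝ (Fin d), v 0 = 0 → v N = 0 →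
      HasDerivAt
        (fun ε : ℝ => ∑ i ∈ Finset.range N,
          h * (⟪(2 : ℝ)⁻¹ • ((p i + ε • w i) + (p (i + 1) + ε • w (i + 1))),
                h⁻¹ • ((q (i + 1) + ε • v (i + 1)) - (q i + ε • v i))⟫
            - H ((2 : ℝ)⁻¹ • ((p i + ε • w i) + (p (i + 1) + ε • w (i + 1))),
                 (2 : ℝ)⁻¹ • ((q i + ε • v i) + (q (i + 1) + ε • v (i + 1))))))
        0 0)
    ↔ ((∀ i, 1 ≤ i → i ≤ N - 1 →
          h⁻¹ • (mid d p i - mid d p (i - 1))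
            = -(2 : ℝ)⁻¹ • (gradHq d H (mid d p i) (mid d q i)
                            + gradHq d H (mid d p (i - 1)) (mid d q (i - 1))))
        ∧ (∀ i < N,
          h⁻¹ • (q (i + 1) - q i) = gradHp d H (mid d p i) (mid d q i))) := by
  have hh₀ : h ≠ 0 := hh.ne'
  have hcrit := forall_firstVariation_eq_zero_iff hh₀
    (positionResidual d h H p q) (momentumResidual d h H p q) (N := N)
  refine (forall₂_congr fun w v => forall₂_congr fun hv0 hvN => ?_).trans
    (hcrit.trans (and_comm.trans (and_congr ?_ ?_)))
  · have hF := hasDerivAt_discreteAction_of_boundary hH hh₀ p q w v hv0 hvN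
    exact ⟨hF.unique, fun h0 => h0 ▸ hF⟩
  · constructor
    · intro hR i h1 h2
      obtain ⟨k, rfl⟩ := Nat.exists_eq_add_of_le' h1
      exact (momentumResidual_eq_zero_iff p q k).mp (hR k (by omega))
    · intro hP k hk
      exact (momentumResidual_eq_zero_iff p q k).mpr (hP (k + 1) (by omega) (by omega))
  · exact forall₂_congr fun i _ => sub_eq_zero

/-- variational characterisation of the discrete mid-point
Hamiltonian system.  `(p,q)` is a critical point of the discrete action
`𝓐(p,q) = Σᵢ h·(⟪p_{∘,i+½}, (q_{i+1}−q_i)/h⟫ − H(p_{∘,i+½}, q_{∘,i+½}))`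
(variations of `q` vanishing at the endpoints, variations of `p` free) iff the
discrete mid-point Hamiltonian system holds. -/
theorem variational_characterisation_midpoint_hamiltonian
    (d N : ℕ) (hN : 2 ≤ N) (h : ℝ) (hh : 0 < h)
    (H : EuclideanSpace ℝ (Fin d) × EuclideanSpace ℝ (Fin d) → ℝ)
    (hH : Differentiable ℝ H)
    (p q : ℕ → EuclideanSpace ℝ (Fin d)) :
    (∀ w v : ℕ → EuclideanSpace ℝ (Fin d), v 0 = 0 → v N = 0 →
      HasDerivAt
        (fun ε : ℝ => ∑ i ∈ Finset.range N,
          h * (⟪(2 : ℝ)⁻¹ • ((p i + ε • w i) + (p (i + 1) + ε • w (i + 1))),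
                h⁻¹ • ((q (i + 1) + ε • v (i + 1)) - (q i + ε • v i))⟫
            - H ((2 : ℝ)⁻¹ • ((p i + ε • w i) + (p (i + 1) + ε • w (i + 1))),
                 (2 : ℝ)⁻¹ • ((q i + ε • v i) + (q (i + 1) + ε • v (i + 1))))))
        0 0)
    ↔ ((∀ i, 1 ≤ i → i ≤ N - 1 →
          h⁻¹ • (mid d p i - mid d p (i - 1))
            = -(2 : ℝ)⁻¹ • (gradHq d H (mid d p i) (mid d q i)
                            + gradHq d H (mid d p (i - 1)) (mid d q (i - 1))))
        ∧ (∀ i < N,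
          h⁻¹ • (q (i + 1) - q i) = gradHp d H (mid d p i) (mid d q i))) :=
  variational_characterisation_midpoint_hamiltonian_general d N h hh H hH p q
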